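/- Let (Ω, 𝒜, μ) be a probability space, J a finite nonempty set, and for each j ∈ J let g_j : Ω → ℝ be a measurable function with 0 ≤ g_j(ω) ≤ 1 for all ω ∈ Ω and ∫ g_j dμ ≥ 1−δ, where δ ≥ 0. Let ε > 2δ and K ∈ ℕ, K ≥ 1, satisfy |J| · 2^{−K(ε−2δ)} < 1. Then there exist ω_1,…,ω_K ∈ Ω such that (1/K) Σ_{k=1}^K g_j(ω_k) ≥ 1−ε for every j ∈ J. -/

import Mathlib

/-!
Base-two Chernoff bound plus a union bound. By Bernoulli, `2 ^ (1 - g) ≤ 2 - g` on `[0, 1]`, so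
`E[2 ^ (1 - g_j)] ≤ 1 + δ ≤ 2 ^ (2δ)`. Markov's inequality for `2 ^ (∑ₖ (1 - g_j(ω_k)))` under
the product measure bounds the probability that the average of `g_j` drops below `1 - ε` by
`2 ^ (-Kε) (2 ^ (2δ)) ^ K = 2 ^ (-K(ε - 2δ))`, and summing over `J` leaves probability
`1 - |J| 2 ^ (-K(ε - 2δ)) > 0` for samples that are good for every `j`.
-/

open MeasureTheory

theorem Real.one_add_le_two_rpow_two_mul {x : ℝ} (hx : 0 ≤ x) : 1 + x ≤ (2 : ℝ) ^ (2 * x) := by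
  have hlog : 1 / 2 < Real.log 2 := by linarith [Real.log_two_gt_d9]
  calc 1 + x ≤ 2 * x * Real.log 2 + 1 := by nlinarith
    _ ≤ Real.exp (2 * x * Real.log 2) := Real.add_one_le_exp _
    _ = (2 : ℝ) ^ (2 * x) := by rw [Real.rpow_def_of_pos two_pos, mul_comm]

theorem one_sub_le_one_div_mul_sum_of_sum_one_sub_lt {ι : Type*} [Fintype ι] {a : ι → ℝ}
    {ε : ℝ} (h : ∑ i, (1 - a i) < Fintype.card ι * ε) :
    1 - ε ≤ 1 / (Fintype.card ι : ℝ) * ∑ i, a i := by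
  have hcard : (0 : ℝ) < Fintype.card ι := by
    rcases isEmpty_or_nonempty ι with hι | hι
    · simp at h
    · exact_mod_cast Fintype.card_pos
  rw [Finset.sum_sub_distrib, Finset.sum_const, Finset.card_univ, nsmul_one] at h
  rw [one_div_mul_eq_div, le_div_iff₀ hcard]
  linarith

theorem exists_forall_notMem_of_sum_measureReal_lt_one {α ι : Type*} [MeasurableSpace α]
    [Fintype ι] (ν : Measure α) [IsProbabilityMeasure ν] (B : ι → Set α)
    (h : ∑ i, ν.real (B i) < 1) : ∃ x, ∀ i, x ∉ B i := by
  by_contra! hcover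
  have hunion : ⋃ i, B i = Set.univ :=
    Set.eq_univ_of_forall fun x => Set.mem_iUnion.2 (hcover x)
  have := measureReal_iUnion_fintype_le (μ := ν) B
  rw [hunion, probReal_univ] at this
  linarith

section Chernoff

variable {Ω : Type*} [MeasurableSpace Ω] {μ : Measure Ω}

theorem measureReal_pi_le_sum_le_two_rpow_neg_mul_pow {ι : Type*} [Fintype ι] [SigmaFinite μ]
    {h : Ω → ℝ} (hint : Integrable (fun x => (2 : ℝ) ^ h x) μ) (t : ℝ) :
    (Measure.pi fun _ : ι => μ).real {ω | t ≤ ∑ i, h (ω i)}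
      ≤ (2 : ℝ) ^ (-t) * (∫ x, (2 : ℝ) ^ h x ∂μ) ^ Fintype.card ι := by
  have hset : {ω : ι → Ω | t ≤ ∑ i, h (ω i)} = {ω | (2 : ℝ) ^ t ≤ ∏ i, (2 : ℝ) ^ h (ω i)} := by
    ext ω
    simp only [← Real.rpow_sum_of_pos two_pos, Real.rpow_le_rpow_left_iff one_lt_two]
  have markov := mul_meas_ge_le_integral_of_nonneg (μ := Measure.pi fun _ : ι => μ)
    (Filter.Eventually.of_forall fun ω => by positivity)
    (Integrable.fintype_prod fun _ => hint) ((2 : ℝ) ^ t)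
  rw [← hset, integral_fintype_prod_eq_pow fun x => (2 : ℝ) ^ h x] at markov
  rw [Real.rpow_neg zero_le_two, ← div_eq_inv_mul, le_div_iff₀' (by positivity)]
  exact markov

variable [IsProbabilityMeasure μ] {g : Ω → ℝ}

theorem integrable_two_rpow_one_sub (hg : Measurable g) (hg01 : ∀ ω, g ω ∈ Set.Icc (0 : ℝ) 1) :
    Integrable (fun ω => (2 : ℝ) ^ (1 - g ω)) μ := by
  refine Integrable.of_bound (measurable_const.pow (measurable_const.sub hg)).aestronglyMeasurable
    2 (Filter.Eventually.of_forall fun ω => ?_)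
  rw [Real.norm_of_nonneg (by positivity)]
  calc (2 : ℝ) ^ (1 - g ω) ≤ 2 ^ (1 : ℝ) :=
        Real.rpow_le_rpow_of_exponent_le one_le_two (by linarith [(hg01 ω).1])
    _ = 2 := Real.rpow_one 2

theorem integral_two_rpow_one_sub_le (hg : Measurable g) (hg01 : ∀ ω, g ω ∈ Set.Icc (0 : ℝ) 1) :
    ∫ ω, (2 : ℝ) ^ (1 - g ω) ∂μ ≤ (2 : ℝ) ^ (2 * (1 - ∫ ω, g ω ∂μ)) := by
  have hgi : Integrable g μ :=
    Integrable.of_bound hg.aestronglyMeasurable 1 (Filter.Eventually.of_forall fun ω => by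
      rw [Real.norm_of_nonneg (hg01 ω).1]; exact (hg01 ω).2)
  -- Bernoulli: `(1 + 1) ^ p ≤ 1 + p` for `p ∈ [0, 1]`.
  have hpointwise : ∀ ω, (2 : ℝ) ^ (1 - g ω) ≤ 2 - g ω := fun ω => by
    have := rpow_one_add_le_one_add_mul_self (s := 1) (by norm_num)
      (sub_nonneg.2 (hg01 ω).2) (by linarith [(hg01 ω).1])
    norm_num at this
    linarith
  have hg_le_one : ∫ ω, g ω ∂μ ≤ 1 := by
    simpa using integral_mono hgi (integrable_const 1) fun ω => (hg01 ω).2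
  calc ∫ ω, (2 : ℝ) ^ (1 - g ω) ∂μ ≤ ∫ ω, (2 - g ω) ∂μ :=
        integral_mono (integrable_two_rpow_one_sub hg hg01) ((integrable_const 2).sub hgi)
          hpointwise
    _ = 1 + (1 - ∫ ω, g ω ∂μ) := by
        rw [integral_sub (integrable_const 2) hgi, integral_const, probReal_univ, one_smul]
        ring
    _ ≤ (2 : ℝ) ^ (2 * (1 - ∫ ω, g ω ∂μ)) := Real.one_add_le_two_rpow_two_mul (by linarith)

theorem measureReal_pi_card_mul_le_sum_one_sub_le {ι : Type*} [Fintype ι] (hg : Measurable g)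
    (hg01 : ∀ ω, g ω ∈ Set.Icc (0 : ℝ) 1) {δ : ℝ} (hδ : 1 - δ ≤ ∫ ω, g ω ∂μ) (ε : ℝ) :
    (Measure.pi fun _ : ι => μ).real {ω | Fintype.card ι * ε ≤ ∑ i, (1 - g (ω i))}
      ≤ (2 : ℝ) ^ (-(Fintype.card ι : ℝ) * (ε - 2 * δ)) := by
  have hexp_le : ∫ ω, (2 : ℝ) ^ (1 - g ω) ∂μ ≤ (2 : ℝ) ^ (2 * δ) :=
    (integral_two_rpow_one_sub_le hg hg01).trans
      (Real.rpow_le_rpow_of_exponent_le one_le_two (by linarith))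
  calc _ ≤ (2 : ℝ) ^ (-(Fintype.card ι * ε))
          * (∫ ω, (2 : ℝ) ^ (1 - g ω) ∂μ) ^ Fintype.card ι :=
        measureReal_pi_le_sum_le_two_rpow_neg_mul_pow (integrable_two_rpow_one_sub hg hg01) _
    _ ≤ (2 : ℝ) ^ (-(Fintype.card ι * ε)) * ((2 : ℝ) ^ (2 * δ)) ^ Fintype.card ι := by
        gcongr
    _ = (2 : ℝ) ^ (-(Fintype.card ι : ℝ) * (ε - 2 * δ)) := by
        rw [← Real.rpow_mul_natCast zero_le_two, ← Real.rpow_add two_pos]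
        ring_nf

end Chernoff

theorem random_code_reduction_core_general
    {Ω : Type*} [MeasurableSpace Ω] (μ : Measure Ω) [IsProbabilityMeasure μ]
    {J : Type*} [Fintype J]
    (g : J → Ω → ℝ) (δ ε : ℝ)
    (hmeas : ∀ j, Measurable (g j))
    (hbound : ∀ j ω, g j ω ∈ Set.Icc (0 : ℝ) 1)
    (hint : ∀ j, 1 - δ ≤ ∫ ω, g j ω ∂μ)
    (K : ℕ)
    (hcard : (Fintype.card J : ℝ) * (2 : ℝ) ^ (-(K : ℝ) * (ε - 2 * δ)) < 1) :
    ∃ ω : Fin K → Ω, ∀ j, 1 - ε ≤ (1 / (K : ℝ)) * ∑ k, g j (ω k) := by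
  have hbad : ∀ j, (Measure.pi fun _ : Fin K => μ).real
      {ω : Fin K → Ω | K * ε ≤ ∑ k, (1 - g j (ω k))} ≤ (2 : ℝ) ^ (-(K : ℝ) * (ε - 2 * δ)) :=
    fun j => by
      simpa using
        measureReal_pi_card_mul_le_sum_one_sub_le (ι := Fin K) (hmeas j) (hbound j) (hint j) ε
  obtain ⟨ω, hω⟩ :=
    exists_forall_notMem_of_sum_measureReal_lt_one (Measure.pi fun _ : Fin K => μ)
      (fun j => {ω : Fin K → Ω | K * ε ≤ ∑ k, (1 - g j (ω k))})
      ((Finset.sum_le_sum fun j _ => hbad j).trans_lt (by simpa using hcard))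
  refine ⟨ω, fun j => ?_⟩
  simpa using one_sub_le_one_div_mul_sum_of_sum_one_sub_lt (a := fun k => g j (ω k))
    (by simpa using hω j)

/-- **core of the Random Code Reduction.** Let `(Ω, 𝒜, μ)` be a
probability space, `J` a finite nonempty index set, and `g j : Ω → ℝ` measurable
functions with values in `[0,1]` and `∫ g j dμ ≥ 1 − δ`. If `ε > 2δ` and `K ≥ 1`
satisfy `|J| · 2^{−K(ε−2δ)} < 1`, then there exist points `ω 1, …, ω K ∈ Ω` such that
`(1/K) Σ_k g j (ω k) ≥ 1 − ε` for every `j ∈ J`. -/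
theorem random_code_reduction_core
    {Ω : Type*} [MeasurableSpace Ω] (μ : Measure Ω) [IsProbabilityMeasure μ]
    {J : Type*} [Fintype J] [Nonempty J]
    (g : J → Ω → ℝ) (δ ε : ℝ) (hδ : 0 ≤ δ)
    (hmeas : ∀ j, Measurable (g j))
    (hbound : ∀ j ω, g j ω ∈ Set.Icc (0 : ℝ) 1)
    (hint : ∀ j, 1 - δ ≤ ∫ ω, g j ω ∂μ)
    (hε : 2 * δ < ε)
    (K : ℕ) (hK : 1 ≤ K)
    (hcard : (Fintype.card J : ℝ) * (2 : ℝ) ^ (-(K : ℝ) * (ε - 2 * δ)) < 1) :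
    ∃ ω : Fin K → Ω, ∀ j, 1 - ε ≤ (1 / (K : ℝ)) * ∑ k, g j (ω k) :=
  random_code_reduction_core_general μ g δ ε hmeas hbound hint K hcard
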